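/- arXiv:2305.01327 — 4 statements merged into one kernel-verified Lean document; each statement's English description precedes it below -/
import Mathlib

section
/- Let f : 𝔹^n → 𝔹^n have non-autoregulated variable n, let 𝒮(x) = (x, f_n(x,0)), and let the reduced network be f̃ = (f_1∘𝒮, …, f_{n-1}∘𝒮) : 𝔹^{n-1} → 𝔹^{n-1}. Then every asynchronous transition of f̃ from x to x̄^i corresponds to an asynchronous transition of f from 𝒮(x) to the state obtained from 𝒮(x) by flipping coordinate i. -/
/-! Flipping coordinate `i` is an asynchronous transition exactly when `f_i` disagrees with the
current value of `x_i`. Since `f̃_i(x) = f_i(𝒮(x))` and `𝒮(x)` agrees with `x` on its first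
coordinates, the two conditions coincide. -/

/-- Asynchronous transition: flip one coordinate i where f disagrees with x. -/
def step {n : ℕ} (f : (Fin n → Bool) → Fin n → Bool) (x y : Fin n → Bool) : Prop :=
  ∃ i : Fin n, f x i ≠ x i ∧ y = Function.update x i (!x i)

/-- Reachability: reflexive-transitive closure of the asynchronous step relation. -/
def reaches {n : ℕ} (f : (Fin n → Bool) → Fin n → Bool) :
    (Fin n → Bool) → (Fin n → Bool) → Prop :=
  Relation.ReflTransGen (step f)

/-- Trap set: no outgoing asynchronous transition. -/
def IsTrap {n : ℕ} (f : (Fin n → Bool) → Fin n → Bool) (B : Set (Fin n → Bool)) : Prop :=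
  ∀ x ∈ B, ∀ y, step f x y → y ∈ B

/-- Attractor: inclusion-minimal nonempty trap set. -/
def IsAttractor {n : ℕ} (f : (Fin n → Bool) → Fin n → Bool) (A : Set (Fin n → Bool)) : Prop :=
  A.Nonempty ∧ IsTrap f A ∧ ∀ B ⊆ A, B.Nonempty → IsTrap f B → B = A

/-- Subspace: the set of states fixing some coordinates to given constants. -/
def IsSubspace {n : ℕ} (T : Set (Fin n → Bool)) : Prop :=
  ∃ (I : Set (Fin n)) (v : Fin n → Bool), T = {x | ∀ i ∈ I, x i = v i}

/-- Trap space: a subspace that is a trap set. -/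
def IsTrapSpace {n : ℕ} (f : (Fin n → Bool) → Fin n → Bool) (T : Set (Fin n → Bool)) : Prop :=
  IsSubspace T ∧ IsTrap f T

/-- Minimal trap space: nonempty trap space minimal under inclusion. -/
def IsMinTrapSpace {n : ℕ} (f : (Fin n → Bool) → Fin n → Bool) (T : Set (Fin n → Bool)) : Prop :=
  T.Nonempty ∧ IsTrapSpace f T ∧
    ∀ T' ⊆ T, T'.Nonempty → IsTrapSpace f T' → T' = T

/-- The lifting map 𝒮(x) = (x, f_n(x,0)). -/
def liftS {n : ℕ} (f : (Fin (n+1) → Bool) → Fin (n+1) → Bool) (x : Fin n → Bool) :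
    Fin (n+1) → Bool :=
  Fin.snoc x (f (Fin.snoc x false) (Fin.last n))

/-- Reduction by elimination of the (non-autoregulated) last variable:
f̃_i(x) = f_i(𝒮(x)). -/
def reduced {n : ℕ} (f : (Fin (n+1) → Bool) → Fin (n+1) → Bool)
    (x : Fin n → Bool) (i : Fin n) : Bool :=
  f (liftS f x) i.castSucc

/-- Projection π onto the first n coordinates. -/
def proj {n : ℕ} (y : Fin (n+1) → Bool) : Fin n → Bool := Fin.init y

theorem eq_of_update_not_eq {ι : Type*} [DecidableEq ι] (x : ι → Bool) {i j : ι}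
    (h : Function.update x i (!x i) = Function.update x j (!x j)) : i = j := by
  by_contra hij
  simpa [Function.update_of_ne hij] using congrFun h i

theorem step_update_iff {n : ℕ} (f : (Fin n → Bool) → Fin n → Bool) (x : Fin n → Bool)
    (i : Fin n) : step f x (Function.update x i (!x i)) ↔ f x i ≠ x i := by
  constructor
  · rintro ⟨j, hj, hflip⟩
    rwa [eq_of_update_not_eq x hflip]
  · exact fun hi => ⟨i, hi, rfl⟩

theorem liftS_castSucc {n : ℕ} (f : (Fin (n+1) → Bool) → Fin (n+1) → Bool)
    (x : Fin n → Bool) (i : Fin n) : liftS f x i.castSucc = x i :=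
  Fin.snoc_castSucc ..

theorem stmt2_general {n : ℕ} (f : (Fin (n+1) → Bool) → Fin (n+1) → Bool)
    (x : Fin n → Bool) (i : Fin n)
    (h : step (reduced f) x (Function.update x i (!x i))) :
    step f (liftS f x)
      (Function.update (liftS f x) i.castSucc (!(liftS f x) i.castSucc)) := by
  rw [step_update_iff] at h ⊢
  rwa [liftS_castSucc]

theorem stmt2 {n : ℕ} (f : (Fin (n+1) → Bool) → Fin (n+1) → Bool)
    (hna : ∀ (x : Fin n → Bool) (a b : Bool),
      f (Fin.snoc x a) (Fin.last n) = f (Fin.snoc x b) (Fin.last n))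
    (x : Fin n → Bool) (i : Fin n)
    (h : step (reduced f) x (Function.update x i (!x i))) :
    step f (liftS f x)
      (Function.update (liftS f x) i.castSucc (!(liftS f x) i.castSucc)) :=
  stmt2_general f x i h
end

section
/- Let f : 𝔹^n → 𝔹^n have non-autoregulated variable n and let f̃ be the reduction obtained by eliminating variable n. If B ⊆ 𝔹^n is a trap set for the asynchronous dynamics of f, then π(B) ⊆ 𝔹^{n-1} is a trap set for the asynchronous dynamics of f̃, where π is the projection onto the first n−1 coordinates. -/
/-!
Let `z ∈ B`. The lift `𝒮(π z)` is reachable from `z` by at most one asynchronous step on the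
eliminated variable, so it lies in `B`; and every transition of `f̃` from `π z` in coordinate `i`
is the projection of the transition of `f` from `𝒮(π z)` in the same coordinate, since
`f̃_i(π z) = f_i(𝒮(π z))` and `𝒮(π z)` agrees with `z` on the first `n` coordinates.
-/

theorem step_iff {n : ℕ} {f : (Fin n → Bool) → Fin n → Bool} {x y : Fin n → Bool} :
    step f x y ↔ ∃ i, f x i ≠ x i ∧ y = Function.update x i (f x i) := by
  refine exists_congr fun i => and_congr_right fun hi => ?_
  rw [← Bool.eq_not_iff.mpr hi]

theorem IsTrap.mem_of_reaches {n : ℕ} {f : (Fin n → Bool) → Fin n → Bool}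
    {B : Set (Fin n → Bool)} (hB : IsTrap f B) {x y : Fin n → Bool} (hx : x ∈ B)
    (hxy : reaches f x y) : y ∈ B := by
  induction hxy with
  | refl => exact hx
  | tail _ hyz ih => exact hB _ ih _ hyz

theorem proj_liftS {n : ℕ} (f : (Fin (n+1) → Bool) → Fin (n+1) → Bool) (x : Fin n → Bool) :
    proj (liftS f x) = x :=
  Fin.init_snoc _ _

/- Non-autoregulation makes `f z (last n)` the last coordinate of `liftS f (proj z)`, so at most
one step on the last variable is needed. -/
theorem reaches_liftS_proj {n : ℕ} {f : (Fin (n+1) → Bool) → Fin (n+1) → Bool}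
    (hna : ∀ (x : Fin n → Bool) (a b : Bool),
      f (Fin.snoc x a) (Fin.last n) = f (Fin.snoc x b) (Fin.last n))
    (z : Fin (n+1) → Bool) : reaches f z (liftS f (proj z)) := by
  have hz : Fin.snoc (proj z) (z (Fin.last n)) = z := Fin.snoc_init_self z
  have hlift : liftS f (proj z) = Function.update z (Fin.last n) (f z (Fin.last n)) := by
    rw [liftS, hna _ false (z (Fin.last n)), hz, ← Fin.update_snoc_last, hz]
  by_cases hfix : f z (Fin.last n) = z (Fin.last n)
  · rw [hlift, hfix, Function.update_eq_self]
    exact .refl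
  · exact .single (step_iff.mpr ⟨_, hfix, hlift⟩)

theorem exists_step_liftS_of_step_reduced {n : ℕ} {f : (Fin (n+1) → Bool) → Fin (n+1) → Bool}
    {x y : Fin n → Bool} (hxy : step (reduced f) x y) :
    ∃ y', step f (liftS f x) y' ∧ proj y' = y := by
  obtain ⟨i, hi, rfl⟩ := step_iff.mp hxy
  refine ⟨Function.update (liftS f x) i.castSucc (reduced f x i), ?_, ?_⟩
  · refine step_iff.mpr ⟨i.castSucc, ?_, rfl⟩
    rwa [liftS_castSucc]
  · rw [proj, Fin.init_update_castSucc, ← proj, proj_liftS]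

theorem stmt3 {n : ℕ} (f : (Fin (n+1) → Bool) → Fin (n+1) → Bool)
    (hna : ∀ (x : Fin n → Bool) (a b : Bool),
      f (Fin.snoc x a) (Fin.last n) = f (Fin.snoc x b) (Fin.last n))
    (B : Set (Fin (n+1) → Bool)) (hB : IsTrap f B) :
    IsTrap (reduced f) (proj '' B) := by
  rintro _ ⟨z, hz, rfl⟩ y hy
  obtain ⟨y', hstep, rfl⟩ := exists_step_liftS_of_step_reduced hy
  exact ⟨y', hB _ (hB.mem_of_reaches hz (reaches_liftS_proj hna z)) _ hstep, rfl⟩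
end

section
/- Let f : 𝔹^n → 𝔹^n have non-autoregulated variable n, reduction f̃, and lifting map 𝒮(x) = (x, f_n(x,0)). If 𝒜 is an attractor of Γ(f) and x ∈ π(𝒜) lies in an attractor of Γ(f̃), then 𝒮(x) ∈ 𝒜. -/
/-!
The last variable does not regulate itself, so from any state `y` its target value is
`f_n(π y, 0)`. Hence `𝒮(π y)` is either `y` itself or the result of updating the last
coordinate of `y`, which is an asynchronous transition; a trap set containing `y` therefore
contains `𝒮(π y)`.
-/

lemma step_snoc_last {n : ℕ} (f : (Fin (n+1) → Bool) → Fin (n+1) → Bool)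
    (x : Fin n → Bool) (c : Bool) (h : f (Fin.snoc x c) (Fin.last n) ≠ c) :
    step f (Fin.snoc x c) (Fin.snoc x (!c)) :=
  ⟨Fin.last n, by simpa using h, by simp [Fin.update_snoc_last]⟩

lemma liftS_eq_or_step {n : ℕ} (f : (Fin (n+1) → Bool) → Fin (n+1) → Bool)
    (hna : ∀ (x : Fin n → Bool) (a b : Bool),
      f (Fin.snoc x a) (Fin.last n) = f (Fin.snoc x b) (Fin.last n))
    (x : Fin n → Bool) (c : Bool) :
    liftS f x = Fin.snoc x c ∨ step f (Fin.snoc x c) (liftS f x) := by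
  have htarget : f (Fin.snoc x c) (Fin.last n) = f (Fin.snoc x false) (Fin.last n) :=
    hna x c false
  by_cases hc : f (Fin.snoc x c) (Fin.last n) = c
  · left
    rw [liftS, ← htarget, hc]
  · right
    have hflip : (!c) = f (Fin.snoc x false) (Fin.last n) := by
      rw [← htarget]; cases c <;> simpa using hc
    rw [liftS, ← hflip]
    exact step_snoc_last f x c hc

lemma IsTrap.liftS_proj_mem {n : ℕ} {f : (Fin (n+1) → Bool) → Fin (n+1) → Bool}
    (hna : ∀ (x : Fin n → Bool) (a b : Bool),
      f (Fin.snoc x a) (Fin.last n) = f (Fin.snoc x b) (Fin.last n))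
    {B : Set (Fin (n+1) → Bool)} (hB : IsTrap f B) {y : Fin (n+1) → Bool} (hy : y ∈ B) :
    liftS f (proj y) ∈ B := by
  have hy_snoc : Fin.snoc (proj y) (y (Fin.last n)) = y := Fin.snoc_init_self y
  rcases liftS_eq_or_step f hna (proj y) (y (Fin.last n)) with heq | hstep
  · rwa [heq, hy_snoc]
  · rw [hy_snoc] at hstep
    exact hB y hy _ hstep

theorem stmt5_general {n : ℕ} (f : (Fin (n+1) → Bool) → Fin (n+1) → Bool)
    (hna : ∀ (x : Fin n → Bool) (a b : Bool),
      f (Fin.snoc x a) (Fin.last n) = f (Fin.snoc x b) (Fin.last n))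
    (A : Set (Fin (n+1) → Bool)) (hA : IsAttractor f A)
    (x : Fin n → Bool) (hx : x ∈ proj '' A) :
    liftS f x ∈ A := by
  obtain ⟨y, hyA, rfl⟩ := hx
  exact hA.2.1.liftS_proj_mem hna hyA

theorem stmt5 {n : ℕ} (f : (Fin (n+1) → Bool) → Fin (n+1) → Bool)
    (hna : ∀ (x : Fin n → Bool) (a b : Bool),
      f (Fin.snoc x a) (Fin.last n) = f (Fin.snoc x b) (Fin.last n))
    (A : Set (Fin (n+1) → Bool)) (hA : IsAttractor f A)
    (x : Fin n → Bool) (hx : x ∈ proj '' A)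
    (hx' : ∃ A' : Set (Fin n → Bool), IsAttractor (reduced f) A' ∧ x ∈ A') :
    liftS f x ∈ A :=
  stmt5_general f hna A hA x hx
end

section
/- Let f : 𝔹^n → 𝔹^n have non-autoregulated variable n with reduction f̃ : 𝔹^{n-1} → 𝔹^{n-1} and lifting 𝒮(x) = (x, f_n(x,0)). Then y is a fixed point of f if and only if y = 𝒮(x) for some fixed point x of f̃; consequently 𝒮 restricts to a bijection between the fixed points of f̃ and the fixed points of f. -/
/-!
Because `f` does not regulate its last variable, the last component of `f y` depends only on
`Fin.init y`, so it equals the last component of `f (liftS f (Fin.init y))`. Hence a fixed point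
`y` of `f` is the lift of its own projection, and a lift `liftS f x` is fixed by `f` exactly when
its first `n` components are, i.e. when `x` is a fixed point of `reduced f`.
-/

namespace Fin

theorem eq_iff_init_eq_and_last_eq {n : ℕ} {α : Type*} {y z : Fin (n + 1) → α} :
    y = z ↔ Fin.init y = Fin.init z ∧ y (Fin.last n) = z (Fin.last n) := by
  refine ⟨fun h => h ▸ ⟨rfl, rfl⟩, fun ⟨hinit, hlast⟩ => ?_⟩
  rw [← Fin.snoc_init_self y, ← Fin.snoc_init_self z, hinit, hlast]

end Fin

section Reduction

variable {n : ℕ} {f : (Fin (n + 1) → Bool) → Fin (n + 1) → Bool}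

theorem init_liftS (x : Fin n → Bool) : Fin.init (liftS f x) = x := by
  simp only [liftS, Fin.init_snoc]

theorem liftS_injective : Function.Injective (liftS f) := fun x x' h => by
  rw [← init_liftS (f := f) x, ← init_liftS (f := f) x', h]

theorem reduced_eq_init (x : Fin n → Bool) : reduced f x = Fin.init (f (liftS f x)) := rfl

theorem liftS_eq_snoc
    (hna : ∀ (x : Fin n → Bool) (a b : Bool),
      f (Fin.snoc x a) (Fin.last n) = f (Fin.snoc x b) (Fin.last n))
    (x : Fin n → Bool) (a : Bool) :
    liftS f x = Fin.snoc x (f (Fin.snoc x a) (Fin.last n)) := by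
  rw [liftS, hna x false a]

theorem liftS_init_of_fixed
    (hna : ∀ (x : Fin n → Bool) (a b : Bool),
      f (Fin.snoc x a) (Fin.last n) = f (Fin.snoc x b) (Fin.last n))
    {y : Fin (n + 1) → Bool} (hy : f y = y) : liftS f (Fin.init y) = y := by
  rw [liftS_eq_snoc hna _ (y (Fin.last n)), Fin.snoc_init_self, hy, Fin.snoc_init_self]

theorem fixed_liftS_iff
    (hna : ∀ (x : Fin n → Bool) (a b : Bool),
      f (Fin.snoc x a) (Fin.last n) = f (Fin.snoc x b) (Fin.last n))
    (x : Fin n → Bool) : f (liftS f x) = liftS f x ↔ reduced f x = x := by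
  have hlast : f (liftS f x) (Fin.last n) = liftS f x (Fin.last n) := by
    rw [liftS, Fin.snoc_last, ← liftS]
    exact hna x _ false
  rw [Fin.eq_iff_init_eq_and_last_eq, init_liftS, ← reduced_eq_init]
  exact and_iff_left hlast

end Reduction

theorem stmt6 {n : ℕ} (f : (Fin (n+1) → Bool) → Fin (n+1) → Bool)
    (hna : ∀ (x : Fin n → Bool) (a b : Bool),
      f (Fin.snoc x a) (Fin.last n) = f (Fin.snoc x b) (Fin.last n)) :
    (∀ y : Fin (n+1) → Bool,
      f y = y ↔ ∃ x : Fin n → Bool, reduced f x = x ∧ y = liftS f x) ∧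
    Set.BijOn (liftS f) {x | reduced f x = x} {y | f y = y} := by
  have fixed_iff (y : Fin (n + 1) → Bool) :
      f y = y ↔ ∃ x : Fin n → Bool, reduced f x = x ∧ y = liftS f x := by
    constructor
    · intro hy
      have hlift := liftS_init_of_fixed hna hy
      refine ⟨Fin.init y, (fixed_liftS_iff hna _).1 ?_, hlift.symm⟩
      rwa [hlift]
    · rintro ⟨x, hx, rfl⟩
      exact (fixed_liftS_iff hna x).2 hx
  refine ⟨fixed_iff, fun x hx => (fixed_liftS_iff hna x).2 hx,
    liftS_injective.injOn, fun y hy => ?_⟩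
  obtain ⟨x, hx, rfl⟩ := (fixed_iff y).1 hy
  exact ⟨x, hx, rfl⟩
end
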